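/- Let n be a real number and define a : ℕ → ℝ by a₀ = 1 and a_{i+1} = (i(i+1) + n)/((i+1)(i+2)) · a_i. Then the power series W₁(x) = Σ_{i≥0} a_i x^{i+1} has radius of convergence at least 1, and for all x ∈ (-1,1), x(1-x)·W₁''(x) = n·W₁(x). -/

import Mathlib

/-!
Multiplied out, the recurrence reads `(i+1)(i+2) a_{i+1} = (i(i+1) + n) a_i`, which says exactly
that the coefficients of `x^{i+1}` in `x W₁''` and in `x² W₁'' + n W₁` agree. Since
`|a_{i+1}| ≤ (1 + |n| / ((i+1)(i+2))) |a_i|` and `∏ (1 + |n| / ((i+1)(i+2))) ≤ exp |n|`, the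
coefficients are bounded, so the series converges on `(-1, 1)` and may be differentiated
termwise there.
-/

open Filter Topology Real

def OneLeRadius (c : ℕ → ℝ) : Prop :=
  ∀ r : ℝ, 0 ≤ r → r < 1 → Summable fun i => |c i| * r ^ i

def derivCoeff (c : ℕ → ℝ) (i : ℕ) : ℝ := (i + 1) * c (i + 1)

def shiftCoeff (a : ℕ → ℝ) : ℕ → ℝ
  | 0 => 0
  | i + 1 => a i

theorem tsum_shiftCoeff_mul_pow (a : ℕ → ℝ) (x : ℝ) :
    ∑' i, shiftCoeff a i * x ^ i = ∑' i, a i * x ^ (i + 1) := by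
  by_cases h : Summable fun i => a i * x ^ (i + 1)
  · rw [tsum_eq_zero_add' (f := fun i => shiftCoeff a i * x ^ i) h]
    simp [shiftCoeff]
  · rw [tsum_eq_zero_of_not_summable h, tsum_eq_zero_of_not_summable]
    exact fun h' => h ((summable_nat_add_iff 1).2 h')

namespace OneLeRadius

variable {c : ℕ → ℝ}

theorem of_abs_le {B : ℝ} (hB : ∀ i, |c i| ≤ B) : OneLeRadius c := fun r hr0 hr1 =>
  ((summable_geometric_of_lt_one hr0 hr1).mul_left B).of_nonneg_of_le
    (fun i => by positivity) fun i => mul_le_mul_of_nonneg_right (hB i) (by positivity)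

theorem summable (hc : OneLeRadius c) {x : ℝ} (hx : |x| < 1) :
    Summable fun i => c i * x ^ i :=
  .of_norm <| (hc |x| (abs_nonneg x) hx).congr fun i => by
    rw [Real.norm_eq_abs, abs_mul, abs_pow]

theorem derivCoeff (hc : OneLeRadius c) : OneLeRadius (derivCoeff c) := by
  intro r hr0 hr1
  obtain ⟨s, hrs, hs1⟩ := exists_between hr1
  have hs0 : 0 < s := hr0.trans_lt hrs
  have hq0 : 0 ≤ r / s := by positivity
  have hq1 : r / s < 1 := (div_lt_one hs0).2 hrs
  have hsum := hc s hs0.le hs1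
  have hbound : ∀ i, |c i| * s ^ i ≤ ∑' j, |c j| * s ^ j := fun i =>
    hsum.le_tsum i fun j _ => by positivity
  have hgeom : Summable fun i : ℕ => ((i : ℝ) + 1) * (r / s) ^ i := by
    have h1 := summable_pow_mul_geometric_of_norm_lt_one 1 (show ‖r / s‖ < 1 by
      rwa [Real.norm_eq_abs, abs_of_nonneg hq0])
    exact (h1.add (summable_geometric_of_lt_one hq0 hq1)).congr fun i => by ring
  refine ((hgeom.mul_left ((∑' j, |c j| * s ^ j) / s))).of_nonneg_of_le
    (fun i => by positivity) fun i => ?_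
  calc |_root_.derivCoeff c i| * r ^ i
      = |c (i + 1)| * s ^ (i + 1) * (((i : ℝ) + 1) * (r / s) ^ i / s) := by
        rw [_root_.derivCoeff, abs_mul, abs_of_pos (by positivity : (0 : ℝ) < i + 1), div_pow]
        field_simp
        ring
    _ ≤ (∑' j, |c j| * s ^ j) * (((i : ℝ) + 1) * (r / s) ^ i / s) :=
        mul_le_mul_of_nonneg_right (hbound _) (by positivity)
    _ = (∑' j, |c j| * s ^ j) / s * (((i : ℝ) + 1) * (r / s) ^ i) := by ring

theorem iterate_derivCoeff (hc : OneLeRadius c) (k : ℕ) : OneLeRadius (_root_.derivCoeff^[k] c) :=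
  Function.Iterate.rec OneLeRadius hc (fun _ h => h.derivCoeff) k

theorem hasDerivAt_tsum (hc : OneLeRadius c) {x : ℝ} (hx : |x| < 1) :
    HasDerivAt (fun z => ∑' i, c i * z ^ i) (∑' i, _root_.derivCoeff c i * x ^ i) x := by
  obtain ⟨r, hxr, hr1⟩ := exists_between hx
  have hr0 : 0 ≤ r := (abs_nonneg x).trans hxr.le
  have hbound : Summable fun i : ℕ => |c i| * (i * r ^ (i - 1)) := by
    refine (summable_nat_add_iff 1).1 ((hc.derivCoeff r hr0 hr1).congr fun i => ?_)
    rw [_root_.derivCoeff, abs_mul, abs_of_pos (by positivity : (0 : ℝ) < i + 1),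
      Nat.add_sub_cancel]
    push_cast
    ring
  have hderiv := hasDerivAt_tsum_of_isPreconnected (g := fun i z => c i * z ^ i)
    (g' := fun i z => c i * (i * z ^ (i - 1))) hbound isOpen_Ioo isPreconnected_Ioo
    (fun i z _ => (hasDerivAt_pow i z).const_mul (c i)) (fun i z hz => ?_) (abs_lt.1 hxr)
    (hc.summable hx) (abs_lt.1 hxr)
  · refine hderiv.congr_deriv ?_
    rw [tsum_eq_zero_add' (f := fun i => c i * (i * x ^ (i - 1)))]
    · simp [_root_.derivCoeff, mul_comm, mul_left_comm]
    · exact (hc.derivCoeff.summable hx).congr fun i => by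
        simp only [_root_.derivCoeff, Nat.cast_add, Nat.cast_one, add_tsub_cancel_right]
        ring
  · have hz' : |z| ≤ r := abs_le.2 ⟨hz.1.le, hz.2.le⟩
    rw [Real.norm_eq_abs, abs_mul, abs_mul, Nat.abs_cast, abs_pow]
    gcongr

theorem iteratedDeriv_tsum (hc : OneLeRadius c) (k : ℕ) {x : ℝ} (hx : |x| < 1) :
    iteratedDeriv k (fun z => ∑' i, c i * z ^ i) x =
      ∑' i, (_root_.derivCoeff^[k] c) i * x ^ i := by
  induction k generalizing x with
  | zero => simp
  | succ k ih =>
    have hnhds : iteratedDeriv k (fun z => ∑' i, c i * z ^ i) =ᶠ[𝓝 x]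
        fun z => ∑' i, (_root_.derivCoeff^[k] c) i * z ^ i :=
      eventually_of_mem ((isOpen_lt continuous_abs continuous_const).mem_nhds hx) fun _ => ih
    rw [iteratedDeriv_succ, hnhds.deriv_eq, Function.iterate_succ_apply']
    exact ((hc.iterate_derivCoeff k).hasDerivAt_tsum hx).deriv

end OneLeRadius

theorem abs_le_mul_exp_of_abs_succ_le {a : ℕ → ℝ} {C : ℝ} (hC : 0 ≤ C)
    (h : ∀ i : ℕ, |a (i + 1)| ≤ (1 + C / ((i + 1) * (i + 2))) * |a i|) (i : ℕ) :
    |a i| ≤ |a 0| * exp C := by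
  -- `1 / ((i + 1) (i + 2)) = 1 / (i + 1) - 1 / (i + 2)` telescopes in the exponent
  have key : ∀ i : ℕ, |a i| ≤ |a 0| * exp (C * (1 - 1 / (i + 1))) := by
    intro i
    induction i with
    | zero => simp
    | succ i ih =>
      calc |a (i + 1)| ≤ (1 + C / ((i + 1) * (i + 2))) * |a i| := h i
        _ ≤ exp (C / ((i + 1) * (i + 2))) * (|a 0| * exp (C * (1 - 1 / (i + 1)))) := by
          gcongr
          linarith [add_one_le_exp (C / ((i + 1) * (i + 2)))]
        _ = |a 0| * exp (C * (1 - 1 / ((i + 1 : ℕ) + 1))) := by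
          rw [mul_left_comm, ← exp_add]
          congr 2
          push_cast
          field_simp
          ring
  refine (key i).trans (mul_le_mul_of_nonneg_left (exp_le_exp.2 ?_) (abs_nonneg _))
  exact mul_le_of_le_one_right hC (sub_le_self _ (by positivity))

section Frobenius

variable {n : ℝ} {a : ℕ → ℝ}
  (hrec : ∀ i : ℕ, ((i : ℝ) + 1) * (i + 2) * a (i + 1) = (i * (i + 1) + n) * a i)
include hrec

theorem abs_succ_le_of_frobenius_rec (i : ℕ) :
    |a (i + 1)| ≤ (1 + |n| / ((i + 1) * (i + 2))) * |a i| := by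
  have hd : (0 : ℝ) < (i + 1) * (i + 2) := by positivity
  rw [one_add_div hd.ne', div_mul_eq_mul_div, le_div_iff₀ hd]
  calc |a (i + 1)| * ((i + 1) * (i + 2)) = |(i : ℝ) * (i + 1) + n| * |a i| := by
        rw [← abs_of_pos hd, ← abs_mul, mul_comm, hrec, abs_mul]
    _ ≤ ((i + 1) * (i + 2) + |n|) * |a i| := by
        gcongr
        refine (abs_add_le _ _).trans ?_
        rw [abs_of_nonneg (by positivity)]
        nlinarith

theorem mul_one_sub_mul_tsum_of_frobenius_rec {x : ℝ}
    (hs : Summable fun i : ℕ => (i * (i + 1) + n) * a i * x ^ i) :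
    x * (1 - x) * ∑' i : ℕ, (i * (i + 1) + n) * a i * x ^ i = n * ∑' i, a i * x ^ (i + 1) := by
  set p : ℕ → ℝ := fun i => (i * (i + 1) + n) * a i * x ^ i with hp
  have hstep : ∀ i : ℕ, p (i + 1) * x - p i * x ^ 2 = n * a (i + 1) * x ^ (i + 1 + 1) := by
    intro i
    simp only [hp]
    push_cast
    linear_combination x ^ (i + 2) * hrec i
  have hshift : Summable fun i => p (i + 1) * x := (summable_nat_add_iff 1).2 (hs.mul_right x)
  have hdiff := (hshift.sub (hs.mul_right (x ^ 2))).congr hstep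
  calc x * (1 - x) * ∑' i, p i = ∑' i, p i * x - ∑' i, p i * x ^ 2 := by
        rw [tsum_mul_right, tsum_mul_right]
        ring
    _ = p 0 * x + ∑' i, (p (i + 1) * x - p i * x ^ 2) := by
        rw [(hs.mul_right x).tsum_eq_zero_add, hshift.tsum_sub (hs.mul_right _)]
        ring
    _ = n * a 0 * x ^ (0 + 1) + ∑' i, n * a (i + 1) * x ^ (i + 1 + 1) := by
        rw [tsum_congr hstep]
        simp [hp]
    _ = n * ∑' i, a i * x ^ (i + 1) := by
        rw [← tsum_mul_left, tsum_eq_zero_add' (f := fun i => n * (a i * x ^ (i + 1)))]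
        · simp only [mul_assoc]
        · simpa only [mul_assoc] using hdiff

end Frobenius

theorem frobenius_W1_general (n : ℝ) (a : ℕ → ℝ)
    (ha : ∀ i : ℕ, a (i+1) = ((i * (i+1) + n) / ((i+1) * (i+2))) * a i) :
    (∀ x : ℝ, |x| < 1 → Summable fun i : ℕ => a i * x ^ (i+1)) ∧
    (∀ x ∈ Set.Ioo (-1:ℝ) 1,
      x * (1-x) * iteratedDeriv 2 (fun x : ℝ => ∑' i : ℕ, a i * x ^ (i+1)) x =
        n * ∑' i : ℕ, a i * x ^ (i+1)) := by
  have hrec : ∀ i : ℕ, ((i : ℝ) + 1) * (i + 2) * a (i + 1) = (i * (i + 1) + n) * a i := by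
    intro i
    rw [ha i]
    field_simp
  have hbound : ∀ i, |shiftCoeff a i| ≤ |a 0| * exp |n|
    | 0 => by simp only [shiftCoeff, abs_zero]; positivity
    | i + 1 =>
      abs_le_mul_exp_of_abs_succ_le (abs_nonneg n) (abs_succ_le_of_frobenius_rec hrec) i
  have hc : OneLeRadius (shiftCoeff a) := OneLeRadius.of_abs_le hbound
  have hW : (fun x : ℝ => ∑' i, a i * x ^ (i + 1)) = fun x => ∑' i, shiftCoeff a i * x ^ i :=
    funext fun x => (tsum_shiftCoeff_mul_pow a x).symm
  have hcoeff : ∀ i : ℕ, derivCoeff^[2] (shiftCoeff a) i = (i * (i + 1) + n) * a i := by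
    intro i
    rw [← hrec]
    show derivCoeff (derivCoeff (shiftCoeff a)) i = _
    simp only [derivCoeff, shiftCoeff, Nat.cast_add, Nat.cast_one]
    ring
  refine ⟨fun x hx => (summable_nat_add_iff 1).2 (hc.summable hx), fun x hx => ?_⟩
  have hx' : |x| < 1 := abs_lt.2 hx
  have hs := (hc.iterate_derivCoeff 2).summable hx'
  simp only [hcoeff] at hs
  rw [hW, hc.iteratedDeriv_tsum 2 hx']
  simp only [hcoeff]
  exact mul_one_sub_mul_tsum_of_frobenius_rec hrec hs

theorem frobenius_W1 (n : ℝ) (a : ℕ → ℝ) (ha0 : a 0 = 1)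
    (ha : ∀ i : ℕ, a (i+1) = ((i * (i+1) + n) / ((i+1) * (i+2))) * a i) :
    (∀ x : ℝ, |x| < 1 → Summable fun i : ℕ => a i * x ^ (i+1)) ∧
    (∀ x ∈ Set.Ioo (-1:ℝ) 1,
      x * (1-x) * iteratedDeriv 2 (fun x : ℝ => ∑' i : ℕ, a i * x ^ (i+1)) x =
        n * ∑' i : ℕ, a i * x ^ (i+1)) :=
  frobenius_W1_general n a ha
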